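/- arXiv:1802.04386 — 4 statements merged into one kernel-verified Lean document; each statement's English description precedes it below -/
import Mathlib

section
/- Let G be a finite connected graph with vertex set I ∪ {r}, where r ∉ I is a distinguished root vertex. Let A_G = {S ⊆ I : the induced subgraph of G on S ∪ {r} is connected}, and for S ∈ A_G let inc_G(S) be the number of edges of G with both endpoints in I and at least one endpoint in S. Then M_G = (A_G, inc_G) is a megagreedoid on I. -/
open Finset

/-- A megagreedoid on the ground set `E`: a set system `A` of subsets of `E`
together with a rank function `r` (recorded as a total function on `Finset ι`,
whose values matter only on members of `A`). -/
structure IsMegagreedoid {ι : Type*} [DecidableEq ι] (E : Finset ι)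
    (A : Set (Finset ι)) (r : Finset ι → ℝ) : Prop where
  subset_ground : ∀ S ∈ A, S ⊆ E
  exists_erase : ∀ S ∈ A, S.Nonempty → ∃ x ∈ S, S.erase x ∈ A
  exists_insert : ∀ S ∈ A, S ≠ E → ∃ y ∈ E \ S, insert y S ∈ A
  submodular : ∀ X ∈ A, ∀ Y ∈ A, X ⊆ Y → ∀ z ∈ E \ Y,
    insert z X ∈ A → insert z Y ∈ A →
    r (insert z Y) - r Y ≤ r (insert z X) - r X

/-- The set system of the rooted-graph megagreedoid: subsets `S` of `I = V ∖ {root}`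
such that the induced subgraph on `S ∪ {root}` is connected. -/
def rootedSys {V : Type*} [Fintype V] [DecidableEq V] (G : SimpleGraph V) (root : V) :
    Set (Finset V) :=
  {S | S ⊆ Finset.univ.erase root ∧
    (SimpleGraph.induce (↑(insert root S) : Set V) G).Connected}

/-- `inc_G(S)`: the number of edges of `G` with both endpoints different from the
root and at least one endpoint in `S`. -/
noncomputable def rootedRank {V : Type*} (G : SimpleGraph V) (root : V)
    (S : Finset V) : ℝ :=
  (Nat.card {e : Sym2 V // e ∈ G.edgeSet ∧ (∀ v ∈ e, v ≠ root) ∧ ∃ v ∈ e, v ∈ S} : ℕ)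

/-!
Removing a leaf other than the root from a spanning tree of `G[S ∪ {root}]` keeps that graph
connected, which gives the deletion axiom; in a connected `G` some edge leaves `S ∪ {root}`
whenever `S ≠ I`, which gives the augmentation axiom. Finally `inc_G` is a coverage function:
`inc_G(S)` counts the root-free edges covered by `S`, so the gain of adding `z` is the number of
root-free edges at `z` not yet covered, which can only shrink as `S` grows.
-/

theorem Set.ncard_union_sub_ncard_le_of_subset {β : Type*} [Finite β] (A : Set β)
    {B C : Set β} (hBC : B ⊆ C) : ((A ∪ C).ncard : ℝ) - C.ncard ≤ (A ∪ B).ncard - B.ncard := by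
  have hgain : ∀ T : Set β, ((A ∪ T).ncard : ℝ) - T.ncard = (A \ T).ncard := fun T => by
    rw [← Set.sdiff_union_self, Set.ncard_union_eq Set.disjoint_sdiff_left]
    push_cast
    ring
  rw [hgain, hgain]
  exact_mod_cast Set.ncard_le_ncard (Set.sdiff_subset_sdiff_right hBC)

namespace SimpleGraph

variable {V : Type*} {G : SimpleGraph V}

theorem Connected.exists_ne_connected_induce_compl_singleton [Finite V] [Nontrivial V]
    (hG : G.Connected) (r : V) : ∃ x, x ≠ r ∧ (G.induce {x}ᶜ).Connected := by
  obtain ⟨T, hTG, hT⟩ := hG.exists_isTree_le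
  have := Fintype.ofFinite V
  classical
  have hleaf : ∀ x, T.degree x = 1 → (G.induce {x}ᶜ).Connected := fun x hx =>
    (hT.connected.induce_compl_singleton_of_degree_eq_one hx).mono fun _ _ h => hTG h
  obtain ⟨u, v, huv, hu, hv⟩ := hT.exists_ne_and_degree_eq_one
  by_cases hur : u = r
  · exact ⟨v, hur ▸ huv.symm, hleaf v hv⟩
  · exact ⟨u, hur, hleaf u hu⟩

theorem exists_ne_connected_induce_sdiff_singleton {s : Set V} (hs : s.Finite)
    (hconn : (G.induce s).Connected) {r a : V} (hr : r ∈ s) (ha : a ∈ s) (har : a ≠ r) :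
    ∃ x ∈ s, x ≠ r ∧ (G.induce (s \ {x})).Connected := by
  have : Finite s := hs
  have : Nontrivial s := ⟨⟨⟨a, ha⟩, ⟨r, hr⟩, fun h => har congr($h.1)⟩⟩
  obtain ⟨x, hxr, hx⟩ := hconn.exists_ne_connected_induce_compl_singleton ⟨r, hr⟩
  refine ⟨x, x.2, fun h => hxr (Subtype.ext h), hx.map ?_ ?_⟩
  · exact ⟨fun v => ⟨v.1.1, v.1.2, fun h => v.2 (Subtype.ext h)⟩, id⟩
  · rintro ⟨v, hvs, hvx⟩
    exact ⟨⟨⟨v, hvs⟩, fun h => hvx congr($h.1)⟩, rfl⟩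

theorem Connected.exists_connected_induce_insert (hG : G.Connected) {s : Set V}
    (hconn : (G.induce s).Connected) {r w : V} (hr : r ∈ s) (hw : w ∉ s) :
    ∃ y ∉ s, (G.induce (insert y s)).Connected := by
  obtain ⟨p⟩ := hG.preconnected r w
  obtain ⟨d, -, hd₁, hd₂⟩ := p.exists_boundary_dart s hr hw
  refine ⟨d.snd, hd₂, ?_⟩
  rw [Set.insert_eq, Set.union_comm]
  exact connected_induce_union hconn.preconnected (by simp [connected_top.preconnected])
    hd₁ rfl d.adj

end SimpleGraph

section Rooted

variable {V : Type*} {G : SimpleGraph V} {root : V}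

def rootedEdges (G : SimpleGraph V) (root : V) (S : Finset V) : Set (Sym2 V) :=
  {e | e ∈ G.edgeSet ∧ (∀ v ∈ e, v ≠ root) ∧ ∃ v ∈ e, v ∈ S}

theorem rootedRank_eq_ncard (S : Finset V) :
    rootedRank G root S = (rootedEdges G root S).ncard := by
  rw [rootedRank, ← Nat.card_coe_set_eq]
  rfl

theorem rootedEdges_mono : Monotone (rootedEdges G root) :=
  fun _ _ hST _ ⟨he, hr, v, hv, hvS⟩ => ⟨he, hr, v, hv, hST hvS⟩

theorem rootedEdges_insert [DecidableEq V] (z : V) (S : Finset V) :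
    rootedEdges G root (insert z S) = rootedEdges G root {z} ∪ rootedEdges G root S := by
  ext e
  simp only [rootedEdges, Finset.mem_insert, Finset.mem_singleton, Set.mem_union,
    Set.mem_ofPred_eq]
  grind

theorem exists_erase_mem_rootedSys [Fintype V] [DecidableEq V] {S : Finset V}
    (hS : S ∈ rootedSys G root) (hne : S.Nonempty) : ∃ x ∈ S, S.erase x ∈ rootedSys G root := by
  obtain ⟨hSI, hconn⟩ := hS
  obtain ⟨a, ha⟩ := hne
  obtain ⟨x, hx, hxr, hconn'⟩ := SimpleGraph.exists_ne_connected_induce_sdiff_singleton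
    (Set.toFinite _) hconn (by simp) (by simp [ha]) (Finset.mem_erase.mp (hSI ha)).1
  have hxS : x ∈ S := by simpa [hxr] using hx
  refine ⟨x, hxS, (Finset.erase_subset _ _).trans hSI, ?_⟩
  rwa [Finset.coe_insert, Finset.coe_erase, Set.insert_sdiff_singleton_comm (Ne.symm hxr),
    ← Finset.coe_insert]

theorem exists_insert_mem_rootedSys [Fintype V] [DecidableEq V] (hG : G.Connected)
    {S : Finset V} (hS : S ∈ rootedSys G root) (hSI : S ≠ Finset.univ.erase root) :
    ∃ y ∈ Finset.univ.erase root \ S, insert y S ∈ rootedSys G root := by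
  obtain ⟨hSsub, hconn⟩ := hS
  obtain ⟨w, hwI, hwS⟩ := Finset.exists_of_ssubset (hSsub.ssubset_of_ne hSI)
  obtain ⟨y, hy, hconn'⟩ := hG.exists_connected_induce_insert hconn (r := root) (w := w)
    (by simp) (by simpa [(Finset.mem_erase.mp hwI).1] using hwS)
  have hyr : y ≠ root := by rintro rfl; simp at hy
  have hyS : y ∉ S := fun h => hy (by simp [h])
  refine ⟨y, by simp [hyr, hyS], Finset.insert_subset (by simp [hyr]) hSsub, ?_⟩
  rwa [Finset.coe_insert, Finset.coe_insert, Set.insert_comm, ← Finset.coe_insert]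

end Rooted

theorem stmt0 {V : Type*} [Fintype V] [DecidableEq V] (G : SimpleGraph V) (root : V)
    (hG : G.Connected) :
    IsMegagreedoid (Finset.univ.erase root) (rootedSys G root) (rootedRank G root) := by
  refine ⟨fun S hS => hS.1, fun S => exists_erase_mem_rootedSys,
    fun S => exists_insert_mem_rootedSys hG, ?_⟩
  intro X _ Y _ hXY z _ _ _
  simp only [rootedRank_eq_ncard, rootedEdges_insert]
  exact Set.ncard_union_sub_ncard_le_of_subset _ (rootedEdges_mono hXY)
end

section
/- Let r : 2^I → ℕ be the rank function of a greedoid on a finite set I, and let A_G be the collection of rank-feasible subsets of I. Then M_G = (A_G, r restricted to A_G) is a megagreedoid on I. -/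
open Finset

/-- `r : 2^I → ℕ` is the rank function of a greedoid. -/
def IsGreedoidRank {ι : Type*} [Fintype ι] [DecidableEq ι] (r : Finset ι → ℕ) : Prop :=
  (∀ A : Finset ι, r A ≤ A.card) ∧
  (∀ A B : Finset ι, A ⊆ B → r A ≤ r B) ∧
  (∀ A : Finset ι, ∀ x ∉ A, ∀ y ∉ A,
    r A = r (insert x A) → r A = r (insert y A) → r A = r (insert x (insert y A)))

/-- A rank-feasible set of a greedoid. -/
def GreedoidRankFeasible {ι : Type*} [Fintype ι] [DecidableEq ι]
    (r : Finset ι → ℕ) (S : Finset ι) : Prop :=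
  ∀ X ⊆ Finset.univ \ S, r (S ∪ X) ≤ r S + X.card

section Helpers

variable {ι : Type*} [DecidableEq ι] {r : Finset ι → ℕ}

/-- If every single-element extension of `S` inside `T` is rank-flat, then `r T = r S`. -/
lemma flat_ext
    (h3 : ∀ A : Finset ι, ∀ x ∉ A, ∀ y ∉ A,
      r A = r (insert x A) → r A = r (insert y A) → r A = r (insert x (insert y A)))
    (hmono : ∀ A B : Finset ι, A ⊆ B → r A ≤ r B) :
    ∀ (n : ℕ) (S T : Finset ι), S ⊆ T → (T \ S).card ≤ n →
      (∀ x ∈ T, x ∉ S → r (insert x S) = r S) → r T = r S := by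
  intro n
  induction n with
  | zero =>
    intro S T hST hcard _
    have h0 : T \ S = ∅ := card_eq_zero.mp (Nat.le_zero.mp hcard)
    have : T ⊆ S := sdiff_eq_empty_iff_subset.mp h0
    rw [Subset.antisymm this hST]
  | succ n ih =>
    intro S T hST hcard hflat
    by_cases hTS : T ⊆ S
    · rw [Subset.antisymm hTS hST]
    · have hne : (T \ S).Nonempty := by
        rw [nonempty_iff_ne_empty]
        intro h; exact hTS (sdiff_eq_empty_iff_subset.mp h)
      obtain ⟨a, ha⟩ := hne
      have haT : a ∈ T := (mem_sdiff.mp ha).1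
      have haS : a ∉ S := (mem_sdiff.mp ha).2
      have key : ∀ u ∈ T, u ∉ S → r (T.erase u) = r S := by
        intro u huT huS
        refine ih S (T.erase u) ?_ ?_ ?_
        · intro s hs
          exact mem_erase.mpr ⟨fun h => huS (h ▸ hs), hST hs⟩
        · have hsub : T.erase u \ S ⊆ (T \ S).erase u := by
            intro v hv
            simp only [mem_sdiff, mem_erase] at *
            tauto
          calc (T.erase u \ S).card ≤ ((T \ S).erase u).card := card_le_card hsub
            _ = (T \ S).card - 1 := card_erase_of_mem (mem_sdiff.mpr ⟨huT, huS⟩)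
            _ ≤ n := by omega
        · intro x hx hxS; exact hflat x (mem_of_mem_erase hx) hxS
      by_cases hb : ∃ b ∈ T, b ∉ S ∧ b ≠ a
      · obtain ⟨b, hbT, hbS, hba⟩ := hb
        set A := (T.erase a).erase b with hA
        have hSA : S ⊆ A := by
          intro s hs
          exact mem_erase.mpr ⟨fun h => hbS (h ▸ hs),
            mem_erase.mpr ⟨fun h => haS (h ▸ hs), hST hs⟩⟩
        have hrA : r A = r S := by
          refine ih S A hSA ?_ ?_
          · have hsub : A \ S ⊆ (T \ S).erase a := by
              intro v hv
              simp only [hA, mem_sdiff, mem_erase] at *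
              tauto
            calc (A \ S).card ≤ ((T \ S).erase a).card := card_le_card hsub
              _ = (T \ S).card - 1 := card_erase_of_mem (mem_sdiff.mpr ⟨haT, haS⟩)
              _ ≤ n := by omega
          · intro x hx hxS
            exact hflat x (mem_of_mem_erase (mem_of_mem_erase hx)) hxS
        have haA : a ∉ A := fun h => (mem_erase.mp (mem_of_mem_erase h)).1 rfl
        have hbA : b ∉ A := fun h => (mem_erase.mp h).1 rfl
        have h1a : insert a A = T.erase b := by
          have hcomm : (T.erase a).erase b = (T.erase b).erase a := by
            ext u; simp only [mem_erase]; tauto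
          rw [hA, hcomm]
          exact insert_erase (mem_erase.mpr ⟨fun h => hba h.symm, haT⟩)
        have h1b : insert b A = T.erase a := insert_erase (mem_erase.mpr ⟨hba, hbT⟩)
        have h2ab : insert a (insert b A) = T := by rw [h1b]; exact insert_erase haT
        have hmain := h3 A a haA b hbA
          (by rw [h1a, key b hbT hbS, hrA])
          (by rw [h1b, key a haT haS, hrA])
        rw [h2ab] at hmain
        rw [← hmain, hrA]
      · push_neg at hb
        have hTeq : T = insert a S := by
          apply Subset.antisymm
          · intro t ht
            by_cases htS : t ∈ S
            · exact mem_insert_of_mem htS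
            · rw [hb t ht htS]; exact mem_insert_self _ _
          · intro t ht
            rcases mem_insert.mp ht with h | h
            · exact h ▸ haT
            · exact hST h
        rw [hTeq]
        exact hflat a haT haS

lemma exists_increase
    (h3 : ∀ A : Finset ι, ∀ x ∉ A, ∀ y ∉ A,
      r A = r (insert x A) → r A = r (insert y A) → r A = r (insert x (insert y A)))
    (hmono : ∀ A B : Finset ι, A ⊆ B → r A ≤ r B)
    {S T : Finset ι} (hST : S ⊆ T) (h : r S < r T) :
    ∃ x, x ∈ T ∧ x ∉ S ∧ r S < r (insert x S) := by
  by_contra hcon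
  push_neg at hcon
  have : r T = r S := by
    refine flat_ext h3 hmono (T \ S).card S T hST le_rfl ?_
    intro x hx hxS
    exact le_antisymm (hcon x hx hxS) (hmono _ _ (subset_insert _ _))
  omega

lemma rank_defect
    (h3 : ∀ A : Finset ι, ∀ x ∉ A, ∀ y ∉ A,
      r A = r (insert x A) → r A = r (insert y A) → r A = r (insert x (insert y A)))
    (hmono : ∀ A B : Finset ι, A ⊆ B → r A ≤ r B)
    (c : ℕ) (hc1 : 1 ≤ c) {S : Finset ι}
    (hc : ∀ y ∈ S, r (S.erase y) + c ≤ r S) :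
    ∀ (n : ℕ) (U : Finset ι), U ⊆ S → U ≠ S → (S \ U).card ≤ n →
      r U + (S \ U).card + c ≤ r S + 1 := by
  intro n
  induction n with
  | zero =>
    intro U hUS hUne hcard
    have h0 : S \ U = ∅ := card_eq_zero.mp (Nat.le_zero.mp hcard)
    exact absurd (Subset.antisymm hUS (sdiff_eq_empty_iff_subset.mp h0)) hUne
  | succ n ih =>
    intro U hUS hUne hcard
    have hne : (S \ U).Nonempty := by
      rw [nonempty_iff_ne_empty]
      intro h
      exact hUne (Subset.antisymm hUS (sdiff_eq_empty_iff_subset.mp h))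
    obtain ⟨y, hy⟩ := hne
    have hyS : y ∈ S := (mem_sdiff.mp hy).1
    have hyU : y ∉ U := (mem_sdiff.mp hy).2
    have hUy : U ⊆ S.erase y := fun u hu =>
      mem_erase.mpr ⟨fun h => hyU (h ▸ hu), hUS hu⟩
    have hUlt : r U + 1 ≤ r S := by
      have h1 := hmono _ _ hUy
      have h2 := hc y hyS
      omega
    by_cases hone : S \ U = {y}
    · have hUeq : U = S.erase y := by
        apply Subset.antisymm hUy
        intro u hu
        have huS : u ∈ S := mem_of_mem_erase hu
        by_contra huU
        have : u ∈ S \ U := mem_sdiff.mpr ⟨huS, huU⟩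
        rw [hone, mem_singleton] at this
        exact (mem_erase.mp hu).1 this
      rw [hone, card_singleton, hUeq]
      have := hc y hyS
      omega
    · obtain ⟨x, hxS, hxU, hlt⟩ := exists_increase h3 hmono hUS (by omega)
      have hxmem : x ∈ S \ U := mem_sdiff.mpr ⟨hxS, hxU⟩
      have hpos : 1 ≤ (S \ U).card := card_pos.mpr ⟨x, hxmem⟩
      have hsd : S \ insert x U = (S \ U).erase x := by
        ext u
        simp only [mem_sdiff, mem_erase, mem_insert]
        tauto
      have hcard' : (S \ insert x U).card + 1 = (S \ U).card := by
        rw [hsd, card_erase_of_mem hxmem]; omega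
      have hne' : insert x U ≠ S := by
        intro h
        apply hone
        have hsub : S \ U ⊆ {x} := by
          intro u hu
          have huS : u ∈ S := (mem_sdiff.mp hu).1
          have huU : u ∉ U := (mem_sdiff.mp hu).2
          rw [← h] at huS
          rcases mem_insert.mp huS with h' | h'
          · exact mem_singleton.mpr h'
          · exact absurd h' huU
        have : y = x := mem_singleton.mp (hsub hy)
        rw [this] at hy ⊢
        exact Subset.antisymm hsub (singleton_subset_iff.mpr hxmem)
      have hih := ih (insert x U) (insert_subset hxS hUS) hne' (by omega)
      omega

/-- If every one-element removal strictly drops the rank, the rank is full. -/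
lemma full_rank_of_all_drop
    (hcard : ∀ A : Finset ι, r A ≤ A.card)
    (h3 : ∀ A : Finset ι, ∀ x ∉ A, ∀ y ∉ A,
      r A = r (insert x A) → r A = r (insert y A) → r A = r (insert x (insert y A)))
    (hmono : ∀ A B : Finset ι, A ⊆ B → r A ≤ r B)
    {S : Finset ι} (h : ∀ y ∈ S, r (S.erase y) < r S) : r S = S.card := by
  rcases eq_or_ne S ∅ with rfl | hne
  · simpa using Nat.le_antisymm (by simpa using hcard ∅) (Nat.zero_le _)
  · have hr0 : r (∅ : Finset ι) = 0 := Nat.le_antisymm (by simpa using hcard ∅) (Nat.zero_le _)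
    have := rank_defect h3 hmono 1 le_rfl (fun y hy => by have := h y hy; omega)
      (S \ ∅).card ∅ (empty_subset S) (Ne.symm hne) le_rfl
    rw [hr0, sdiff_empty] at this
    have := hcard S
    omega

lemma exists_small_drop
    (hcard : ∀ A : Finset ι, r A ≤ A.card)
    (h3 : ∀ A : Finset ι, ∀ x ∉ A, ∀ y ∉ A,
      r A = r (insert x A) → r A = r (insert y A) → r A = r (insert x (insert y A)))
    (hmono : ∀ A B : Finset ι, A ⊆ B → r A ≤ r B)
    {S : Finset ι} (hS : S.Nonempty) : ∃ x ∈ S, r S ≤ r (S.erase x) + 1 := by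
  by_contra hcon
  push_neg at hcon
  have hr0 : r (∅ : Finset ι) = 0 := Nat.le_antisymm (by simpa using hcard ∅) (Nat.zero_le _)
  have := rank_defect h3 hmono 2 (by omega) (fun y hy => by have := hcon y hy; omega)
    (S \ ∅).card ∅ (empty_subset S) (by rintro rfl; exact hS.ne_empty rfl) le_rfl
  rw [hr0, sdiff_empty] at this
  have := hcard S
  omega

end Helpers

section RF

variable {ι : Type*} [Fintype ι] [DecidableEq ι] {r : Finset ι → ℕ}

lemma rf_iff {S : Finset ι} :
    GreedoidRankFeasible r S ↔ ∀ T, S ⊆ T → r T ≤ r S + (T \ S).card := by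
  constructor
  · intro h T hST
    have hX : T \ S ⊆ Finset.univ \ S := by
      intro x hx
      exact mem_sdiff.mpr ⟨mem_univ x, (mem_sdiff.mp hx).2⟩
    have := h (T \ S) hX
    rwa [union_sdiff_of_subset hST] at this
  · intro h X hX
    calc r (S ∪ X) ≤ r S + ((S ∪ X) \ S).card := h _ subset_union_left
      _ ≤ r S + X.card := by
          have : (S ∪ X) \ S ⊆ X := by
            intro u hu
            have := mem_sdiff.mp hu
            rcases mem_union.mp this.1 with h' | h'
            · exact absurd h' this.2
            · exact h'
          exact Nat.add_le_add_left (card_le_card this) _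

lemma rf_of_full_rank (hcard : ∀ A : Finset ι, r A ≤ A.card)
    {S : Finset ι} (h : r S = S.card) : GreedoidRankFeasible r S := by
  intro X hX
  calc r (S ∪ X) ≤ (S ∪ X).card := hcard _
    _ ≤ S.card + X.card := card_union_le _ _
    _ = r S + X.card := by rw [h]

lemma rf_unit (hmono : ∀ A B : Finset ι, A ⊆ B → r A ≤ r B)
    {S : Finset ι} (hS : GreedoidRankFeasible r S) {x : ι} (hx : x ∉ S) :
    r (insert x S) ≤ r S + 1 := by
  have := rf_iff.mp hS (insert x S) (subset_insert _ _)
  have hsub : insert x S \ S ⊆ {x} := by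
    intro u hu
    have := mem_sdiff.mp hu
    rcases mem_insert.mp this.1 with h' | h'
    · exact mem_singleton.mpr h'
    · exact absurd h' this.2
  have := card_le_card hsub
  simp only [card_singleton] at this
  omega

lemma rf_jump (hmono : ∀ A B : Finset ι, A ⊆ B → r A ≤ r B)
    {S : Finset ι} (hS : GreedoidRankFeasible r S) {x : ι} (hx : x ∉ S)
    (hr : r (insert x S) = r S + 1) : GreedoidRankFeasible r (insert x S) := by
  rw [rf_iff]
  intro T hT
  have hST : S ⊆ T := (subset_insert _ _).trans hT
  have hxT : x ∈ T := hT (mem_insert_self _ _)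
  have hsd : T \ S = insert x (T \ insert x S) := by
    ext u
    simp only [mem_sdiff, mem_insert]
    constructor
    · rintro ⟨huT, huS⟩
      by_cases hux : u = x
      · exact Or.inl hux
      · exact Or.inr ⟨huT, fun h => h.elim hux huS⟩
    · rintro (rfl | ⟨huT, huS⟩)
      · exact ⟨hxT, hx⟩
      · exact ⟨huT, fun h => huS (Or.inr h)⟩
  have hxnot : x ∉ T \ insert x S := by
    simp [mem_sdiff]
  have hcards : (T \ S).card = (T \ insert x S).card + 1 := by
    rw [hsd, card_insert_of_notMem hxnot]
  have := rf_iff.mp hS T hST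
  omega

lemma rf_erase (hmono : ∀ A B : Finset ι, A ⊆ B → r A ≤ r B)
    {S : Finset ι} (hS : GreedoidRankFeasible r S) {x : ι} (hx : x ∈ S)
    (hr : r (S.erase x) = r S) : GreedoidRankFeasible r (S.erase x) := by
  rw [rf_iff]
  intro T hT
  have hsub1 : S ⊆ insert x T := by
    intro s hs
    by_cases hsx : s = x
    · exact hsx ▸ mem_insert_self _ _
    · exact mem_insert_of_mem (hT (mem_erase.mpr ⟨hsx, hs⟩))
  have h1 : r T ≤ r (insert x T) := hmono _ _ (subset_insert _ _)
  have h2 := rf_iff.mp hS (insert x T) hsub1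
  have hsub2 : insert x T \ S ⊆ T \ S.erase x := by
    intro u hu
    have := mem_sdiff.mp hu
    have huS : u ∉ S := this.2
    have hux : u ≠ x := fun h => huS (h ▸ hx)
    rcases mem_insert.mp this.1 with h' | h'
    · exact absurd h' hux
    · exact mem_sdiff.mpr ⟨h', fun h => huS (mem_of_mem_erase h)⟩
  have h3' := card_le_card hsub2
  rw [hr]
  omega

lemma sub_key
    (hcard : ∀ A : Finset ι, r A ≤ A.card)
    (hmono : ∀ A B : Finset ι, A ⊆ B → r A ≤ r B)
    (h3 : ∀ A : Finset ι, ∀ x ∉ A, ∀ y ∉ A,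
      r A = r (insert x A) → r A = r (insert y A) → r A = r (insert x (insert y A))) :
    ∀ (k : ℕ) (X Y : Finset ι) (z : ι),
      GreedoidRankFeasible r X → GreedoidRankFeasible r (insert z X) →
      z ∉ Y → X ⊆ Y → (Y \ X).card ≤ k →
      r (insert z X) = r X → r (insert z Y) ≤ r Y := by
  intro k
  induction k with
  | zero =>
    intro X Y z _ _ _ hXY hc hflat
    have h0 : Y \ X = ∅ := card_eq_zero.mp (Nat.le_zero.mp hc)
    have : Y = X := Subset.antisymm (sdiff_eq_empty_iff_subset.mp h0) hXY
    rw [this, hflat]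
  | succ k ih =>
    intro X Y z hX hzX hzY hXY hc hflat
    have hzXnot : z ∉ X := fun h => hzY (hXY h)
    by_cases hW : ∃ w ∈ Y, w ∉ X ∧ r (insert w X) ≠ r X
    · obtain ⟨w, hwY, hwX, hne⟩ := hW
      have hwz : w ≠ z := fun h => hzY (h ▸ hwY)
      have hge : r X ≤ r (insert w X) := hmono _ _ (subset_insert _ _)
      have h1 : r (insert w X) = r X + 1 := by
        have := rf_unit hmono hX hwX
        omega
      have hX' : GreedoidRankFeasible r (insert w X) := rf_jump hmono hX hwX h1
      have hwzX : w ∉ insert z X := by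
        simp only [mem_insert]
        rintro (h | h)
        · exact hwz h
        · exact hwX h
      have hcomm : insert z (insert w X) = insert w (insert z X) := Finset.insert_comm z w X
      have h2' : r (insert z (insert w X)) = r (insert w X) := by
        have hle : r (insert w (insert z X)) ≤ r (insert z X) + 1 :=
          rf_unit hmono hzX hwzX
        have hge' : r (insert w X) ≤ r (insert w (insert z X)) := by
          rw [← hcomm]; exact hmono _ _ (subset_insert _ _)
        rw [hcomm]
        omega
      have hzX' : GreedoidRankFeasible r (insert z (insert w X)) := by
        rw [hcomm]
        refine rf_jump hmono hzX hwzX ?_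
        rw [← hcomm, h2', h1, hflat]
      have hzwX : z ∉ insert w X := by
        simp only [mem_insert]
        rintro (h | h)
        · exact hwz h.symm
        · exact hzXnot h
      have hmem : w ∈ Y \ X := mem_sdiff.mpr ⟨hwY, hwX⟩
      have hsd : Y \ insert w X = (Y \ X).erase w := by
        ext u
        simp only [mem_sdiff, mem_erase, mem_insert]
        tauto
      have hc' : (Y \ insert w X).card ≤ k := by
        rw [hsd, card_erase_of_mem hmem]
        have : 1 ≤ (Y \ X).card := card_pos.mpr ⟨w, hmem⟩
        omega
      exact ih (insert w X) Y z hX' hzX' hzY (insert_subset hwY hXY) hc' h2'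
    · push_neg at hW
      have hfinal : r (insert z Y) = r X := by
        refine flat_ext h3 hmono (insert z Y \ X).card X (insert z Y)
          (hXY.trans (subset_insert _ _)) le_rfl ?_
        intro x hx hxX
        rcases mem_insert.mp hx with rfl | hxY
        · exact hflat
        · exact hW x hxY hxX
      rw [hfinal]
      exact hmono _ _ hXY

end RF

theorem stmt2 {ι : Type*} [Fintype ι] [DecidableEq ι] (r : Finset ι → ℕ)
    (hr : IsGreedoidRank r) :
    IsMegagreedoid Finset.univ {S | GreedoidRankFeasible r S} (fun S => (r S : ℝ)) := by
  obtain ⟨hcard, hmono, h3⟩ := hr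
  constructor
  · intro S _
    exact subset_univ S
  · -- exists_erase
    intro S hS hne
    simp only [Set.mem_setOf_eq] at hS ⊢
    by_cases hdrop : ∃ x ∈ S, r (S.erase x) = r S
    · obtain ⟨x, hxS, hx⟩ := hdrop
      exact ⟨x, hxS, rf_erase hmono hS hxS hx⟩
    · push_neg at hdrop
      have hlt : ∀ y ∈ S, r (S.erase y) < r S := by
        intro y hy
        have := hmono _ _ (erase_subset y S)
        exact lt_of_le_of_ne this (hdrop y hy)
      have hfull : r S = S.card := full_rank_of_all_drop hcard h3 hmono hlt
      obtain ⟨x, hxS, hx⟩ := exists_small_drop hcard h3 hmono hne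
      refine ⟨x, hxS, rf_of_full_rank hcard ?_⟩
      have h1 : r (S.erase x) ≤ (S.erase x).card := hcard _
      have h2 : (S.erase x).card = S.card - 1 := card_erase_of_mem hxS
      have h3' : 1 ≤ S.card := card_pos.mpr ⟨x, hxS⟩
      omega
  · -- exists_insert
    intro S hS hne
    simp only [Set.mem_setOf_eq] at hS ⊢
    by_cases hjump : ∃ y, y ∉ S ∧ r (insert y S) = r S + 1
    · obtain ⟨y, hyS, hy⟩ := hjump
      exact ⟨y, mem_sdiff.mpr ⟨mem_univ y, hyS⟩, rf_jump hmono hS hyS hy⟩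
    · push_neg at hjump
      have hflat : ∀ y, y ∉ S → r (insert y S) = r S := by
        intro y hy
        have h1 := rf_unit hmono hS hy
        have h2 := hmono _ _ (subset_insert y S)
        have h3' := hjump y hy
        omega
      have : ∃ y, y ∉ S := by
        by_contra hcon
        push_neg at hcon
        exact hne (eq_univ_iff_forall.mpr hcon)
      obtain ⟨y, hyS⟩ := this
      refine ⟨y, mem_sdiff.mpr ⟨mem_univ y, hyS⟩, ?_⟩
      rw [rf_iff]
      intro T hT
      have hST : S ⊆ T := (subset_insert _ _).trans hT
      have hTflat : r T = r S :=
        flat_ext h3 hmono (T \ S).card S T hST le_rfl (fun x _ hxS => hflat x hxS)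
      rw [hTflat, hflat y hyS]
      omega
  · -- submodular
    intro X hX Y hY hXY z hz hzX hzY
    simp only [Set.mem_setOf_eq] at hX hY hzX hzY
    have hzYnot : z ∉ Y := (mem_sdiff.mp hz).2
    have hzXnot : z ∉ X := fun h => hzYnot (hXY h)
    have hXle : r X ≤ r (insert z X) := hmono _ _ (subset_insert _ _)
    have hXu : r (insert z X) ≤ r X + 1 := rf_unit hmono hX hzXnot
    have hYle : r Y ≤ r (insert z Y) := hmono _ _ (subset_insert _ _)
    have hYu : r (insert z Y) ≤ r Y + 1 := rf_unit hmono hY hzYnot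
    by_cases hcase : r (insert z X) = r X
    · have hkey := sub_key hcard hmono h3 (Y \ X).card X Y z hX hzX hzYnot hXY le_rfl hcase
      have heq : r (insert z Y) = r Y := le_antisymm hkey hYle
      rw [hcase, heq]
      norm_num
    · have h1 : r (insert z X) = r X + 1 := by omega
      rw [h1]
      push_cast
      have : (r (insert z Y) : ℝ) ≤ (r Y : ℝ) + 1 := by exact_mod_cast hYu
      linarith
end

section
/- Let I = S ⊔ T be a disjoint union of finite sets, let (A, r) be a megagreedoid on S and (B, s) a megagreedoid on T. Define A·B = {X ∪ Y : X ∈ A, Y ∈ B} and (r·s)(Z) = r(Z ∩ S) + s(Z ∩ T) for Z ∈ A·B. Then the direct sum (A·B, r·s) is a megagreedoid on I. -/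
open Finset

/-- Direct sum of set systems. -/
def dsumSys {ι : Type*} [DecidableEq ι] (A B : Set (Finset ι)) : Set (Finset ι) :=
  {Z | ∃ X ∈ A, ∃ Y ∈ B, Z = X ∪ Y}

/-- Direct sum of rank functions, with ground sets `E₁` and `E₂`. -/
def dsumRank {ι : Type*} [DecidableEq ι] (E₁ E₂ : Finset ι) (r s : Finset ι → ℝ) :
    Finset ι → ℝ :=
  fun Z => r (Z ∩ E₁) + s (Z ∩ E₂)

lemma aux_inter_left {ι : Type*} [DecidableEq ι] {E₁ E₂ X Y : Finset ι}
    (hdis : Disjoint E₁ E₂) (hX : X ⊆ E₁) (hY : Y ⊆ E₂) : (X ∪ Y) ∩ E₁ = X := by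
  ext a
  simp only [mem_inter, mem_union]
  constructor
  · rintro ⟨h1 | h1, h2⟩
    · exact h1
    · exact absurd h2 (fun h => (Finset.disjoint_left.mp hdis h (hY h1)))
  · exact fun h => ⟨Or.inl h, hX h⟩

lemma aux_inter_right {ι : Type*} [DecidableEq ι] {E₁ E₂ X Y : Finset ι}
    (hdis : Disjoint E₁ E₂) (hX : X ⊆ E₁) (hY : Y ⊆ E₂) : (X ∪ Y) ∩ E₂ = Y := by
  rw [union_comm]
  exact aux_inter_left hdis.symm hY hX

theorem stmt3 {ι : Type*} [DecidableEq ι] (E₁ E₂ : Finset ι) (hdis : Disjoint E₁ E₂)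
    (A B : Set (Finset ι)) (r s : Finset ι → ℝ)
    (hA : IsMegagreedoid E₁ A r) (hB : IsMegagreedoid E₂ B s) :
    IsMegagreedoid (E₁ ∪ E₂) (dsumSys A B) (dsumRank E₁ E₂ r s) := by
  -- canonical decomposition of a member of dsumSys
  have hdec : ∀ Z ∈ dsumSys A B, Z ∩ E₁ ∈ A ∧ Z ∩ E₂ ∈ B ∧ Z = (Z ∩ E₁) ∪ (Z ∩ E₂) := by
    rintro Z ⟨X, hX, Y, hY, rfl⟩
    have h1 := aux_inter_left hdis (hA.subset_ground X hX) (hB.subset_ground Y hY)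
    have h2 := aux_inter_right hdis (hA.subset_ground X hX) (hB.subset_ground Y hY)
    rw [h1, h2]
    exact ⟨hX, hY, rfl⟩
  constructor
  · rintro Z ⟨X, hX, Y, hY, rfl⟩
    exact union_subset_union (hA.subset_ground X hX) (hB.subset_ground Y hY)
  · rintro Z ⟨X, hX, Y, hY, rfl⟩ hne
    rcases (X ∪ Y).eq_empty_or_nonempty with h | h
    · exact absurd h hne.ne_empty
    by_cases hXne : X.Nonempty
    · obtain ⟨x, hx, hx'⟩ := hA.exists_erase X hX hXne
      refine ⟨x, mem_union_left _ hx, X.erase x, hx', Y, hY, ?_⟩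
      have hxY : x ∉ Y := fun hxy =>
        Finset.disjoint_left.mp hdis (hA.subset_ground X hX hx) (hB.subset_ground Y hY hxy)
      ext a
      simp only [mem_erase, mem_union]
      constructor
      · rintro ⟨ha, h1 | h1⟩
        · exact Or.inl ⟨ha, h1⟩
        · exact Or.inr h1
      · rintro (⟨ha, h1⟩ | h1)
        · exact ⟨ha, Or.inl h1⟩
        · exact ⟨fun h => hxY (h ▸ h1), Or.inr h1⟩
    · have hX0 : X = ∅ := not_nonempty_iff_eq_empty.mp hXne
      have hYne : Y.Nonempty := by
        rcases h with ⟨a, ha⟩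
        rcases mem_union.mp ha with h1 | h1
        · exact absurd (hX0 ▸ h1) (notMem_empty a)
        · exact ⟨a, h1⟩
      obtain ⟨y, hy, hy'⟩ := hB.exists_erase Y hY hYne
      refine ⟨y, mem_union_right _ hy, X, hX, Y.erase y, hy', ?_⟩
      have hyX : y ∉ X := by rw [hX0]; exact notMem_empty y
      ext a
      simp only [mem_erase, mem_union]
      constructor
      · rintro ⟨ha, h1 | h1⟩
        · exact Or.inl h1
        · exact Or.inr ⟨ha, h1⟩
      · rintro (h1 | ⟨ha, h1⟩)
        · exact ⟨fun h => hyX (h ▸ h1), Or.inl h1⟩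
        · exact ⟨ha, Or.inr h1⟩
  · rintro Z ⟨X, hX, Y, hY, rfl⟩ hne
    by_cases hXE : X = E₁
    · have hYE : Y ≠ E₂ := fun h => hne (by rw [hXE, h])
      obtain ⟨y, hy, hy'⟩ := hB.exists_insert Y hY hYE
      rcases mem_sdiff.mp hy with ⟨hy1, hy2⟩
      refine ⟨y, mem_sdiff.mpr ⟨mem_union_right _ hy1, ?_⟩, X, hX, insert y Y, hy', ?_⟩
      · intro hmem
        rcases mem_union.mp hmem with h1 | h1
        · exact Finset.disjoint_left.mp hdis (hA.subset_ground X hX h1) hy1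
        · exact hy2 h1
      · ext a; simp only [insert_union_distrib, mem_union, mem_insert]; tauto
    · obtain ⟨x, hx, hx'⟩ := hA.exists_insert X hX hXE
      rcases mem_sdiff.mp hx with ⟨hx1, hx2⟩
      refine ⟨x, mem_sdiff.mpr ⟨mem_union_left _ hx1, ?_⟩, insert x X, hx', Y, hY, ?_⟩
      · intro hmem
        rcases mem_union.mp hmem with h1 | h1
        · exact hx2 h1
        · exact Finset.disjoint_left.mp hdis hx1 (hB.subset_ground Y hY h1)
      · ext a; simp only [insert_union_distrib, mem_union, mem_insert]; tauto
  · intro X hXmem Y hYmem hXY z hz hzX hzY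
    obtain ⟨hX1, hX2, hXeq⟩ := hdec X hXmem
    obtain ⟨hY1, hY2, hYeq⟩ := hdec Y hYmem
    rcases mem_sdiff.mp hz with ⟨hzE, hzYn⟩
    rcases mem_union.mp hzE with hz1 | hz1
    · -- z ∈ E₁
      have hzE2 : z ∉ E₂ := Finset.disjoint_left.mp hdis hz1
      have e1 : ∀ W : Finset ι, (insert z W) ∩ E₁ = insert z (W ∩ E₁) := fun W => by
        rw [insert_inter_of_mem hz1]
      have e2 : ∀ W : Finset ι, (insert z W) ∩ E₂ = W ∩ E₂ := fun W => by
        rw [insert_inter_of_notMem hzE2]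
      have hzX1 : insert z (X ∩ E₁) ∈ A := by
        have := (hdec _ hzX).1
        rwa [e1] at this
      have hzY1 : insert z (Y ∩ E₁) ∈ A := by
        have := (hdec _ hzY).1
        rwa [e1] at this
      have key := hA.submodular (X ∩ E₁) hX1 (Y ∩ E₁) hY1
        (inter_subset_inter_right hXY) z
        (mem_sdiff.mpr ⟨hz1, fun h => hzYn (mem_inter.mp h).1⟩) hzX1 hzY1
      simp only [dsumRank, e1, e2]
      linarith
    · -- z ∈ E₂
      have hzE1 : z ∉ E₁ := Finset.disjoint_right.mp hdis hz1
      have e1 : ∀ W : Finset ι, (insert z W) ∩ E₁ = W ∩ E₁ := fun W => by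
        rw [insert_inter_of_notMem hzE1]
      have e2 : ∀ W : Finset ι, (insert z W) ∩ E₂ = insert z (W ∩ E₂) := fun W => by
        rw [insert_inter_of_mem hz1]
      have hzX2 : insert z (X ∩ E₂) ∈ B := by
        have := (hdec _ hzX).2.1
        rwa [e2] at this
      have hzY2 : insert z (Y ∩ E₂) ∈ B := by
        have := (hdec _ hzY).2.1
        rwa [e2] at this
      have key := hB.submodular (X ∩ E₂) hX2 (Y ∩ E₂) hY2
        (inter_subset_inter_right hXY) z
        (mem_sdiff.mpr ⟨hz1, fun h => hzYn (mem_inter.mp h).1⟩) hzX2 hzY2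
      simp only [dsumRank, e1, e2]
      linarith
end

section
/- Let (Σ, Γ) be a relative simplicial complex on a finite vertex set V (Γ ⊆ Σ are simplicial complexes), let Ψ = Σ∖Γ be its set of faces, and let ρ : V → {1,…,n−1} be a proper coloring of the 1-skeleton of Σ such that every maximal face of Ψ has exactly n−1 vertices whose colors are precisely {1,…,n−1}. Suppose F_1, …, F_k is a shelling order of the maximal faces of Ψ: for each i, the set Ψ_i∖Ψ_{i−1} has a unique minimal element R(F_i) under inclusion, where Ψ_i = {σ ∈ Ψ : σ ⊆ F_j for some j ≤ i}. Then F(Σ, Γ, ρ) = Σ_{σ ∈ Ψ} M_{ρ(σ), n} = Σ_{i=1}^{k} F_{ρ(R(F_i)), n}, where ρ(σ) = {ρ(x) : x ∈ σ}. -/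
/-!
The faces of `Ψ = Σ ∖ Γ` form an order-convex family, and a shelling partitions it into the
Boolean intervals `[R(Fᵢ), Fᵢ]`: a face lies in the interval of the first facet containing it,
and in no other, since `R(Fᵢ) ⊆ σ ⊆ Fⱼ` forces `i ≤ j`. On a facet the coloring is injective
with image `{1, …, n-1}`, so `σ ↦ ρ(σ)` maps `[R(Fᵢ), Fᵢ]` bijectively onto the sets `T` with
`ρ(R(Fᵢ)) ⊆ T ⊆ {1, …, n-1}`, and the interval contributes `∑_T M_T = F_{ρ(R(Fᵢ))}`. This last
identity holds coefficientwise: the coefficient of `x^d` in either side counts the unique weakly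
increasing word of content `d`, by `F_S` when `S` lies in its ascent set and by `M_T` when `T` is
its ascent set.
-/

open Finset

/-- The fundamental quasisymmetric function `F_{S,n}`: sum of `x_{i₁} ⋯ x_{iₙ}` over
weakly increasing sequences `i₁ ≤ ⋯ ≤ iₙ` of positive integers with a strict
increase `i_j < i_{j+1}` whenever `j ∈ S`. -/
noncomputable def fundQSym (S : Finset ℕ) (n : ℕ) : MvPowerSeries ℕ+ ℤ :=
  fun d => (Nat.card {w : Fin n → ℕ+ //
    (∀ j k : Fin n, j ≤ k → w j ≤ w k) ∧
    (∀ k : ℕ, ∀ hk : k + 1 < n, (k + 1) ∈ S →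
      w ⟨k, Nat.lt_of_succ_lt hk⟩ < w ⟨k + 1, hk⟩) ∧
    ∀ q : ℕ+, d q = (Finset.univ.filter fun j => w j = q).card} : ℤ)

/-- The monomial quasisymmetric function `M_{S,n}`: sum of `x_{i₁} ⋯ x_{iₙ}` over
weakly increasing sequences whose set of strict ascents is exactly `S`. -/
noncomputable def monoQSym (S : Finset ℕ) (n : ℕ) : MvPowerSeries ℕ+ ℤ :=
  fun d => (Nat.card {w : Fin n → ℕ+ //
    (∀ j k : Fin n, j ≤ k → w j ≤ w k) ∧
    (∀ k : ℕ, ∀ hk : k + 1 < n,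
      (w ⟨k, Nat.lt_of_succ_lt hk⟩ < w ⟨k + 1, hk⟩ ↔ (k + 1) ∈ S)) ∧
    ∀ q : ℕ+, d q = (Finset.univ.filter fun j => w j = q).card} : ℤ)

section Shelling

variable {α : Type*} [PartialOrder α] {k : ℕ}

/-- `R i` is the least element of `Ψᵢ ∖ Ψᵢ₋₁`, the faces of `Ψ` below `F i` but below no
earlier `F j`. -/
def IsShelling (Ψ : Set α) (F R : Fin k → α) : Prop :=
  ∀ i, IsLeast {τ ∈ Ψ | τ ≤ F i ∧ ∀ j < i, ¬τ ≤ F j} (R i)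

namespace IsShelling

variable {Ψ : Set α} {F R : Fin k → α}

theorem le_of_le_of_le (h : IsShelling Ψ F R) {i j : Fin k} {σ : α} (hRσ : R i ≤ σ)
    (hσF : σ ≤ F j) : i ≤ j :=
  le_of_not_gt fun hji => (h i).1.2.2 j hji (hRσ.trans hσF)

theorem exists_le_le (h : IsShelling Ψ F R) (hcover : ∀ σ ∈ Ψ, ∃ i, σ ≤ F i) {σ : α}
    (hσ : σ ∈ Ψ) : ∃ i, R i ≤ σ ∧ σ ≤ F i := by
  obtain ⟨i, hi⟩ := exists_minimal_of_wellFoundedLT _ (hcover σ hσ)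
  exact ⟨i, (h i).2 ⟨hσ, hi.prop, fun j hj => hi.not_prop_of_lt hj⟩, hi.prop⟩

theorem sum_filter_mem_eq_sum_Icc [Fintype α] [LocallyFiniteOrder α] [DecidablePred (· ∈ Ψ)]
    {M : Type*} [AddCommMonoid M] (h : IsShelling Ψ F R) (hΨ : Ψ.OrdConnected)
    (hF : ∀ i, F i ∈ Ψ) (hcover : ∀ σ ∈ Ψ, ∃ i, σ ≤ F i) (f : α → M) :
    ∑ σ ∈ univ.filter (· ∈ Ψ), f σ = ∑ i, ∑ σ ∈ Icc (R i) (F i), f σ := by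
  classical
  have hpart : univ.filter (· ∈ Ψ) = univ.biUnion fun i => Icc (R i) (F i) := by
    ext σ
    simp only [mem_filter, mem_univ, true_and, mem_biUnion, mem_Icc]
    refine ⟨h.exists_le_le hcover, ?_⟩
    rintro ⟨i, hRσ, hσF⟩
    exact hΨ.out (h i).1.1 (hF i) ⟨hRσ, hσF⟩
  rw [hpart, sum_biUnion]
  intro i _ j _ hij
  refine disjoint_left.2 fun σ hσi hσj => hij ?_
  rw [mem_Icc] at hσi hσj
  exact (h.le_of_le_of_le hσi.1 hσj.2).antisymm (h.le_of_le_of_le hσj.1 hσi.2)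

end IsShelling

end Shelling

theorem Finset.sum_Icc_image_of_injOn {V W M : Type*} [DecidableEq V] [DecidableEq W]
    [AddCommMonoid M] {ρ : V → W} {R F : Finset V} (hRF : R ⊆ F) (hρ : Set.InjOn ρ F)
    (g : Finset W → M) :
    ∑ σ ∈ Icc R F, g (σ.image ρ) = ∑ T ∈ Icc (R.image ρ) (F.image ρ), g T := by
  refine sum_nbij' (image ρ) (fun T => F.filter (ρ · ∈ T)) (fun σ hσ => ?_) (fun T hT => ?_)
    (fun σ hσ => ?_) (fun T hT => ?_) fun _ _ => rfl
  · rw [mem_Icc] at hσ ⊢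
    exact ⟨image_subset_image hσ.1, image_subset_image hσ.2⟩
  · rw [mem_Icc] at hT ⊢
    exact ⟨fun v hv => mem_filter.2 ⟨hRF hv, hT.1 (mem_image_of_mem ρ hv)⟩, filter_subset _ _⟩
  · have hσF := (mem_Icc.1 hσ).2
    ext v
    simp only [mem_filter, mem_image]
    constructor
    · rintro ⟨hv, u, hu, huv⟩
      rwa [← hρ (hσF hu) hv huv]
    · exact fun hv => ⟨hσF hv, v, hv, rfl⟩
  · rw [← filter_image (p := (· ∈ T)), filter_mem_eq_inter, inter_eq_right.2 (mem_Icc.1 hT).2]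

section Quasisymmetric

variable {n : ℕ}

/-- The ascent set of a word, 1-indexed: `m + 1` is an ascent of `w` when `w m < w (m + 1)`. -/
def ascents (w : Fin n → ℕ+) : Finset ℕ :=
  (univ.filter fun j : Fin n => ∃ h : j.val + 1 < n, w j < w ⟨j + 1, h⟩).image (·.val + 1)

theorem succ_mem_ascents {w : Fin n → ℕ+} {m : ℕ} :
    m + 1 ∈ ascents w ↔ ∃ h : m + 1 < n, w ⟨m, Nat.lt_of_succ_lt h⟩ < w ⟨m + 1, h⟩ := by
  simp only [ascents, mem_image, mem_filter, mem_univ, true_and]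
  constructor
  · rintro ⟨j, hj, hjm⟩
    obtain rfl : (j : ℕ) = m := by omega
    exact hj
  · rintro ⟨h, hlt⟩
    exact ⟨⟨m, Nat.lt_of_succ_lt h⟩, ⟨h, hlt⟩, rfl⟩

theorem ascents_subset_Icc (w : Fin n → ℕ+) : ascents w ⊆ Icc 1 (n - 1) := by
  intro s hs
  simp only [ascents, mem_image, mem_filter, mem_univ, true_and] at hs
  obtain ⟨j, ⟨h, -⟩, rfl⟩ := hs
  exact mem_Icc.2 ⟨by omega, by omega⟩

theorem exists_eq_succ_of_mem_Icc {s : ℕ} (hs : s ∈ Icc 1 (n - 1)) : ∃ m, s = m + 1 ∧ m + 1 < n :=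
  ⟨s - 1, by have := mem_Icc.1 hs; omega⟩

theorem subset_ascents_iff {S : Finset ℕ} (hS : S ⊆ Icc 1 (n - 1)) {w : Fin n → ℕ+} :
    S ⊆ ascents w ↔ ∀ m (h : m + 1 < n), m + 1 ∈ S →
      w ⟨m, Nat.lt_of_succ_lt h⟩ < w ⟨m + 1, h⟩ := by
  refine ⟨fun hSw m h hm => (succ_mem_ascents.1 (hSw hm)).2, fun hw s hs => ?_⟩
  obtain ⟨m, rfl, h⟩ := exists_eq_succ_of_mem_Icc (hS hs)
  exact succ_mem_ascents.2 ⟨h, hw m h hs⟩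

theorem ascents_eq_iff {T : Finset ℕ} (hT : T ⊆ Icc 1 (n - 1)) {w : Fin n → ℕ+} :
    ascents w = T ↔ ∀ m (h : m + 1 < n),
      (w ⟨m, Nat.lt_of_succ_lt h⟩ < w ⟨m + 1, h⟩ ↔ m + 1 ∈ T) := by
  constructor
  · rintro rfl m h
    exact ⟨fun hlt => succ_mem_ascents.2 ⟨h, hlt⟩, fun hm => (succ_mem_ascents.1 hm).2⟩
  · intro hw
    ext s
    by_cases hs : s ∈ Icc 1 (n - 1)
    · obtain ⟨m, rfl, h⟩ := exists_eq_succ_of_mem_Icc hs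
      rw [succ_mem_ascents, ← hw m h]
      exact ⟨fun ⟨_, hlt⟩ => hlt, fun hlt => ⟨h, hlt⟩⟩
    · exact iff_of_false (fun h => hs (ascents_subset_Icc w h)) fun h => hs (hT h)

open scoped Classical in
noncomputable def sortedWordsWithContent (n : ℕ) (d : ℕ+ →₀ ℕ) : Finset (Fin n → ℕ+) :=
  {w ∈ Fintype.piFinset fun _ => d.support |
    (∀ j k : Fin n, j ≤ k → w j ≤ w k) ∧ ∀ q : ℕ+, d q = #{j | w j = q}}

theorem natCard_eq_card_filter_sortedWordsWithContent (d : ℕ+ →₀ ℕ)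
    (C : (Fin n → ℕ+) → Prop) [DecidablePred C] :
    Nat.card {w : Fin n → ℕ+ //
        (∀ j k : Fin n, j ≤ k → w j ≤ w k) ∧ C w ∧ ∀ q : ℕ+, d q = #{j | w j = q}} =
      #{w ∈ sortedWordsWithContent n d | C w} := by
  refine Nat.subtype_card _ fun w => ?_
  simp only [sortedWordsWithContent, mem_filter, Fintype.mem_piFinset, Finsupp.mem_support_iff]
  constructor
  · rintro ⟨⟨-, hmono, hd⟩, hC⟩
    exact ⟨hmono, hC, hd⟩
  · rintro ⟨hmono, hC, hd⟩
    refine ⟨⟨fun j => ?_, hmono, hd⟩, hC⟩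
    rw [hd]
    exact card_ne_zero.2 ⟨j, mem_filter.2 ⟨mem_univ j, rfl⟩⟩

theorem coeff_fundQSym {S : Finset ℕ} (hS : S ⊆ Icc 1 (n - 1)) (d : ℕ+ →₀ ℕ) :
    MvPowerSeries.coeff d (fundQSym S n) = #{w ∈ sortedWordsWithContent n d | S ⊆ ascents w} := by
  classical
  rw [MvPowerSeries.coeff_apply, fundQSym, natCard_eq_card_filter_sortedWordsWithContent]
  exact congrArg _ (congrArg _ (filter_congr fun w _ => (subset_ascents_iff hS).symm))

theorem coeff_monoQSym {T : Finset ℕ} (hT : T ⊆ Icc 1 (n - 1)) (d : ℕ+ →₀ ℕ) :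
    MvPowerSeries.coeff d (monoQSym T n) = #{w ∈ sortedWordsWithContent n d | ascents w = T} := by
  classical
  rw [MvPowerSeries.coeff_apply, monoQSym, natCard_eq_card_filter_sortedWordsWithContent]
  exact congrArg _ (congrArg _ (filter_congr fun w _ => (ascents_eq_iff hT).symm))

theorem fundQSym_eq_sum_monoQSym {S : Finset ℕ} (hS : S ⊆ Icc 1 (n - 1)) :
    fundQSym S n = ∑ T ∈ Icc S (Icc 1 (n - 1)), monoQSym T n := by
  ext d
  rw [map_sum, coeff_fundQSym hS,
    sum_congr rfl fun T hT => coeff_monoQSym (mem_Icc.1 hT).2 d, ← Nat.cast_sum,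
    card_eq_sum_card_fiberwise fun w hw =>
      mem_Icc.2 ⟨(mem_filter.1 hw).2, ascents_subset_Icc w⟩]
  refine congrArg _ (sum_congr rfl fun T hT => ?_)
  rw [filter_filter]
  exact congrArg _ (filter_congr fun w _ => ⟨And.right, fun h => ⟨h ▸ (mem_Icc.1 hT).1, h⟩⟩)

end Quasisymmetric

open scoped Classical in
theorem stmt16_general {V : Type*} [Fintype V] [DecidableEq V]
    (Sig Gam : Set (Finset V)) (n k : ℕ) (ρ : V → ℕ)
    (hSig : ∀ s ∈ Sig, ∀ t ⊆ s, t ∈ Sig)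
    (hGam : ∀ s ∈ Gam, ∀ t ⊆ s, t ∈ Gam)
    (hproper : ∀ u v : V, ({u, v} : Finset V) ∈ Sig → u ≠ v → ρ u ≠ ρ v)
    (hbal : ∀ F ∈ Sig \ Gam, (∀ G ∈ Sig \ Gam, F ⊆ G → F = G) →
      F.card = n - 1 ∧ F.image ρ = Finset.Icc 1 (n - 1))
    (F : Fin k → Finset V)
    (hFfacet : ∀ i : Fin k, F i ∈ Sig \ Gam ∧ ∀ G ∈ Sig \ Gam, F i ⊆ G → F i = G)
    (hFall : ∀ G ∈ Sig \ Gam, (∀ G' ∈ Sig \ Gam, G ⊆ G' → G = G') → ∃ i : Fin k, F i = G)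
    (R : Fin k → Finset V)
    (hshelling : ∀ i : Fin k,
      (R i ∈ Sig \ Gam ∧ R i ⊆ F i ∧ ∀ j : Fin k, j < i → ¬R i ⊆ F j) ∧
      ∀ τ ∈ Sig \ Gam, τ ⊆ F i → (∀ j : Fin k, j < i → ¬τ ⊆ F j) → R i ⊆ τ) :
    (∑ σ ∈ Finset.univ.filter (fun σ : Finset V => σ ∈ Sig \ Gam),
        monoQSym (σ.image ρ) n) =
      ∑ i : Fin k, fundQSym ((R i).image ρ) n := by
  have hΨ : (Sig \ Gam).OrdConnected :=
    (show IsLowerSet Sig from fun _ _ hts hs => hSig _ hs _ hts).ordConnected.inter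
      (show IsLowerSet Gam from fun _ _ hts hs => hGam _ hs _ hts).compl.ordConnected
  have hshell : IsShelling (Sig \ Gam) F R := fun i =>
    ⟨(hshelling i).1, fun τ ⟨hτ, hτF, hτj⟩ => (hshelling i).2 τ hτ hτF hτj⟩
  have hcover : ∀ σ ∈ Sig \ Gam, ∃ i, σ ⊆ F i := by
    intro σ hσ
    obtain ⟨G, hσG, hG⟩ := Finite.exists_le_maximal (p := (· ∈ Sig \ Gam)) hσ
    obtain ⟨i, rfl⟩ := hFall G hG.prop fun G' hG' hGG' => hG.eq_of_le hG' hGG'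
    exact ⟨i, hσG⟩
  rw [hshell.sum_filter_mem_eq_sum_Icc hΨ (fun i => (hFfacet i).1) hcover]
  refine sum_congr rfl fun i _ => ?_
  have hRF : R i ⊆ F i := (hshelling i).1.2.1
  obtain ⟨-, himg⟩ := hbal _ (hFfacet i).1 (hFfacet i).2
  have hinj : Set.InjOn ρ (F i) := fun u hu v hv huv => by_contra fun hne =>
    hproper u v (hSig _ (hFfacet i).1.1 _ (insert_subset hu (singleton_subset_iff.2 hv))) hne huv
  rw [sum_Icc_image_of_injOn hRF hinj (fun T => monoQSym T n), himg,
    fundQSym_eq_sum_monoQSym (himg ▸ image_subset_image hRF)]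

open scoped Classical in
theorem stmt16 {V : Type*} [Fintype V] [DecidableEq V]
    (Sig Gam : Set (Finset V)) (n k : ℕ) (ρ : V → ℕ)
    (hSig : ∀ s ∈ Sig, ∀ t ⊆ s, t ∈ Sig)
    (hGam : ∀ s ∈ Gam, ∀ t ⊆ s, t ∈ Gam)
    (hsub : Gam ⊆ Sig)
    (hρrange : ∀ v : V, ρ v ∈ Finset.Icc 1 (n - 1))
    (hproper : ∀ u v : V, ({u, v} : Finset V) ∈ Sig → u ≠ v → ρ u ≠ ρ v)
    (hbal : ∀ F ∈ Sig \ Gam, (∀ G ∈ Sig \ Gam, F ⊆ G → F = G) →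
      F.card = n - 1 ∧ F.image ρ = Finset.Icc 1 (n - 1))
    (F : Fin k → Finset V)
    (hFfacet : ∀ i : Fin k, F i ∈ Sig \ Gam ∧ ∀ G ∈ Sig \ Gam, F i ⊆ G → F i = G)
    (hFinj : Function.Injective F)
    (hFall : ∀ G ∈ Sig \ Gam, (∀ G' ∈ Sig \ Gam, G ⊆ G' → G = G') → ∃ i : Fin k, F i = G)
    (R : Fin k → Finset V)
    (hshelling : ∀ i : Fin k,
      (R i ∈ Sig \ Gam ∧ R i ⊆ F i ∧ ∀ j : Fin k, j < i → ¬R i ⊆ F j) ∧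
      ∀ τ ∈ Sig \ Gam, τ ⊆ F i → (∀ j : Fin k, j < i → ¬τ ⊆ F j) → R i ⊆ τ) :
    (∑ σ ∈ Finset.univ.filter (fun σ : Finset V => σ ∈ Sig \ Gam),
        monoQSym (σ.image ρ) n) =
      ∑ i : Fin k, fundQSym ((R i).image ρ) n :=
  stmt16_general Sig Gam n k ρ hSig hGam hproper hbal F hFfacet hFall R hshelling
end
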